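/- arXiv:1411.4174 — 6 statements merged into one kernel-verified Lean document; each statement's English description precedes it below -/
import Mathlib

section
/- If T is a contraction on a Hilbert space H, H₁ ⊆ H is a closed subspace invariant under T, and T₁ = T restricted to H₁, then the defect space 𝒟_{T₁} = closure(D_{T₁} H₁) equals the closure of P_{H₁}(𝒟_T), where P_{H₁} is the orthogonal projection onto H₁. -/
/-!
In a Hilbert space the closure of the range of `A` is `(ker A†)ᗮ`. Both sides of the theorem are
such closures: of the range of `D_{T₁}`, and of the range of `P_{H₁} D_T`, whose adjoint is `D_T`
restricted to `H₁`. On `H₁` one has `‖D_{T₁} x‖² = ‖x‖² - ‖T x‖² = ‖D_T x‖²`, so the two kernels,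
and hence the two closures, coincide.
-/

open ContinuousLinearMap

open scoped InnerProduct

namespace ContinuousLinearMap

variable {𝕜 E F : Type*} [RCLike 𝕜]
  [NormedAddCommGroup E] [InnerProductSpace 𝕜 E] [CompleteSpace E]
  [NormedAddCommGroup F] [InnerProductSpace 𝕜 F] [CompleteSpace F]

theorem closure_range_eq_orthogonal_ker_adjoint (A : E →L[𝕜] F) :
    closure (Set.range A) = ((A†).ker)ᗮ := by
  rw [orthogonal_ker, adjoint_adjoint, Submodule.topologicalClosure_coe, LinearMap.coe_range,
    coe_coe]

theorem norm_sq_apply_of_comp_self_eq_one_sub {D B : E →L[𝕜] E} (hD : IsSelfAdjoint D)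
    (hD_sq : D ∘L D = 1 - B† ∘L B) (x : E) :
    ‖D x‖ ^ 2 = ‖x‖ ^ 2 - ‖B x‖ ^ 2 := by
  rw [apply_norm_sq_eq_inner_adjoint_left, hD.adjoint_eq, hD_sq,
    apply_norm_sq_eq_inner_adjoint_left]
  simp [inner_sub_left]

theorem norm_defect_restrict_apply (K : Submodule 𝕜 E) [CompleteSpace K]
    {T D : E →L[𝕜] E} {T₁ D₁ : K →L[𝕜] K} (hT₁ : ∀ x : K, (T₁ x : E) = T x)
    (hD : IsSelfAdjoint D) (hD_sq : D ∘L D = 1 - T† ∘L T)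
    (hD₁ : IsSelfAdjoint D₁) (hD₁_sq : D₁ ∘L D₁ = 1 - T₁† ∘L T₁) (x : K) :
    ‖D₁ x‖ = ‖D x‖ := by
  have hsq : ‖D₁ x‖ ^ 2 = ‖D x‖ ^ 2 := by
    rw [norm_sq_apply_of_comp_self_eq_one_sub hD₁ hD₁_sq,
      norm_sq_apply_of_comp_self_eq_one_sub hD hD_sq, ← hT₁, Submodule.coe_norm,
      Submodule.coe_norm]
  exact (pow_left_inj₀ (norm_nonneg _) (norm_nonneg _) two_ne_zero).mp hsq

theorem ker_defect_restrict (K : Submodule 𝕜 E) [CompleteSpace K]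
    {T D : E →L[𝕜] E} {T₁ D₁ : K →L[𝕜] K} (hT₁ : ∀ x : K, (T₁ x : E) = T x)
    (hD : IsSelfAdjoint D) (hD_sq : D ∘L D = 1 - T† ∘L T)
    (hD₁ : IsSelfAdjoint D₁) (hD₁_sq : D₁ ∘L D₁ = 1 - T₁† ∘L T₁) :
    D₁.ker = (D ∘L K.subtypeL).ker := by
  ext x
  simp only [LinearMap.mem_ker, coe_coe, comp_apply, Submodule.subtypeL_apply]
  rw [← norm_eq_zero, ← norm_eq_zero (a := D x),
    norm_defect_restrict_apply K hT₁ hD hD_sq hD₁ hD₁_sq]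

end ContinuousLinearMap

theorem stmt1_general {H : Type*} [NormedAddCommGroup H] [InnerProductSpace ℂ H] [CompleteSpace H]
    (T : H →L[ℂ] H)
    (H₁ : Submodule ℂ H) [CompleteSpace H₁]
    (T₁ : H₁ →L[ℂ] H₁) (hT₁ : ∀ x : H₁, (T₁ x : H) = T x)
    (DT : H →L[ℂ] H) (hDT_pos : DT.IsPositive)
    (hDT_sq : DT ∘L DT = 1 - (adjoint T) ∘L T)
    (DT₁ : H₁ →L[ℂ] H₁) (hDT₁_pos : DT₁.IsPositive)
    (hDT₁_sq : DT₁ ∘L DT₁ = 1 - (adjoint T₁) ∘L T₁) :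
    closure (Set.range DT₁) =
      closure ((H₁.orthogonalProjectionOnto) '' (closure (Set.range DT))) := by
  set P : H →L[ℂ] H₁ := H₁.orthogonalProjectionOnto
  have hDT := hDT_pos.isSelfAdjoint
  have hDT₁ := hDT₁_pos.isSelfAdjoint
  calc closure (Set.range DT₁)
      = (DT₁†.ker)ᗮ := closure_range_eq_orthogonal_ker_adjoint DT₁
    _ = ((DT ∘L H₁.subtypeL).ker)ᗮ := by
      rw [hDT₁.adjoint_eq, ker_defect_restrict H₁ hT₁ hDT hDT_sq hDT₁ hDT₁_sq]
    _ = ((P ∘L DT)†.ker)ᗮ := by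
      rw [adjoint_comp, H₁.adjoint_orthogonalProjectionOnto, hDT.adjoint_eq]
    _ = closure (Set.range (P ∘L DT)) := (closure_range_eq_orthogonal_ker_adjoint _).symm
    _ = closure (P '' closure (Set.range DT)) := by
      rw [coe_comp, Set.range_comp, closure_image_closure P.continuous]

/-- If `T` is a contraction on a Hilbert space `H`, `H₁ ⊆ H` is a closed
subspace invariant under `T`, and `T₁ = T|_{H₁}`, then the defect space
`𝒟_{T₁} = closure (D_{T₁} H₁)` equals the closure of `P_{H₁}(𝒟_T)`, where `P_{H₁}` is the
orthogonal projection onto `H₁`.  Here, for a contraction `A`, `D_A` denotes the positive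
square root of `I - A^*A` and `𝒟_A` the closure of its range. -/
theorem stmt1 {H : Type*} [NormedAddCommGroup H] [InnerProductSpace ℂ H] [CompleteSpace H]
    (T : H →L[ℂ] H) (hT : ‖T‖ ≤ 1)
    (H₁ : Submodule ℂ H) (hH₁ : IsClosed (H₁ : Set H)) [CompleteSpace H₁]
    (hinv : ∀ x ∈ H₁, T x ∈ H₁)
    (T₁ : H₁ →L[ℂ] H₁) (hT₁ : ∀ x : H₁, (T₁ x : H) = T x)
    (DT : H →L[ℂ] H) (hDT_pos : DT.IsPositive)
    (hDT_sq : DT ∘L DT = 1 - (adjoint T) ∘L T)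
    (DT₁ : H₁ →L[ℂ] H₁) (hDT₁_pos : DT₁.IsPositive)
    (hDT₁_sq : DT₁ ∘L DT₁ = 1 - (adjoint T₁) ∘L T₁) :
    closure (Set.range DT₁) =
      closure ((H₁.orthogonalProjectionOnto) '' (closure (Set.range DT))) :=
  stmt1_general T H₁ T₁ hT₁ DT hDT_pos hDT_sq DT₁ hDT₁_pos hDT₁_sq
end

section
/- Let T₁ : E₁ → H and T₂ : E₂ → H be contractions between Hilbert spaces, and let M(T_i) denote the range of T_i with the inner product making T_i a coisometry onto it (i.e., ⟨T_i ξ, T_i η⟩ := ⟨ξ, η⟩ for ξ, η ∈ (ker T_i)^⊥). Then M(T₁) ⊆ M(T₂) with a contractive inclusion if and only if T₁T₁^* ≤ T₂T₂^*. -/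
open ContinuousLinearMap

/-!
`T₁T₁* ≤ T₂T₂*` says exactly that `‖T₁* x‖ ≤ ‖T₂* x‖` for all `x`. Given this, for each `ξ` the
functional `T₂* x ↦ ⟪T₁ ξ, x⟫` is well defined and bounded by `‖ξ‖` on the range of `T₂*`;
Hahn–Banach and Riesz turn it into some `η` with `T₂ η = T₁ ξ` and `‖η‖ ≤ ‖ξ‖` (Douglas' lemma),
which is the contractive inclusion `M(T₁) ⊆ M(T₂)`. Conversely, for `a = T₁* x` the contractive
inclusion gives `‖a‖² = ⟪x, T₁ a⟫ ≤ ‖T₂* x‖ ‖T₁ a‖_{M(T₂)} ≤ ‖T₂* x‖ ‖a‖`.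
-/

/-- The norm of an element `h` of the operator-range space `M(T)` (the range of `T` endowed
with the inner product `⟨Tξ, Tη⟩ = ⟨ξ, η⟩` for `ξ, η ∈ (ker T)^⊥`): it is the infimum of the
norms of the preimages of `h` under `T`, which is attained at the unique preimage lying in
`(ker T)^⊥`. -/
noncomputable def rangeNorm {E H : Type*} [NormedAddCommGroup E] [NormedAddCommGroup H]
    [InnerProductSpace ℂ E] [InnerProductSpace ℂ H] (T : E →L[ℂ] H) (h : H) : ℝ :=
  sInf {r : ℝ | ∃ ξ : E, T ξ = h ∧ ‖ξ‖ = r}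

section RangeNorm

variable {E H : Type*} [NormedAddCommGroup E] [InnerProductSpace ℂ E]
  [NormedAddCommGroup H] [InnerProductSpace ℂ H]

theorem rangeNorm_apply_le (T : E →L[ℂ] H) (ξ : E) : rangeNorm T (T ξ) ≤ ‖ξ‖ :=
  csInf_le ⟨0, fun _ ⟨η, _, hη⟩ => hη ▸ norm_nonneg η⟩ ⟨ξ, rfl, rfl⟩

theorem exists_apply_eq_norm_eq_rangeNorm [CompleteSpace E] (T : E →L[ℂ] H) (ξ : E) :
    ∃ ξ₀, T ξ₀ = T ξ ∧ ‖ξ₀‖ = rangeNorm T (T ξ) := by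
  -- The preimage orthogonal to `ker T` is the one of least norm.
  let K : Submodule ℂ E := LinearMap.ker (T : E →ₗ[ℂ] H)
  have : CompleteSpace K := (isClosed_ker T).completeSpace_coe
  have mem_K : ∀ v, v ∈ K ↔ T v = 0 := fun _ => LinearMap.mem_ker
  have hξ₀ : T (ξ - K.starProjection ξ) = T ξ := by
    rw [map_sub, (mem_K _).mp (K.starProjection_apply_mem ξ), sub_zero]
  refine ⟨ξ - K.starProjection ξ, hξ₀, le_antisymm ?_ (hξ₀ ▸ rangeNorm_apply_le T _)⟩
  refine le_csInf ⟨‖ξ‖, ξ, rfl, rfl⟩ ?_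
  rintro _ ⟨η, hη, rfl⟩
  have hmem : ξ - η ∈ K := (mem_K _).mpr (by rw [map_sub, hη, sub_self])
  rw [K.starProjection_minimal]
  calc ⨅ w : K, ‖ξ - w‖ ≤ ‖ξ - (ξ - η)‖ :=
        ciInf_le ⟨0, Set.forall_mem_range.mpr fun _ => norm_nonneg _⟩ (⟨ξ - η, hmem⟩ : K)
    _ = ‖η‖ := by rw [sub_sub_cancel]

theorem norm_inner_le_norm_adjoint_mul_rangeNorm [CompleteSpace E] [CompleteSpace H]
    (T : E →L[ℂ] H) (x : H) (ξ : E) :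
    ‖inner ℂ x (T ξ)‖ ≤ ‖adjoint T x‖ * rangeNorm T (T ξ) := by
  obtain ⟨ξ₀, hξ₀, hξ₀_norm⟩ := exists_apply_eq_norm_eq_rangeNorm T ξ
  rw [← hξ₀, ← adjoint_inner_left, hξ₀, ← hξ₀_norm]
  exact norm_inner_le_norm _ _

end RangeNorm

section Factorization

variable {𝕜 E M : Type*} [RCLike 𝕜] [NormedAddCommGroup E] [NormedSpace 𝕜 E]
  [AddCommGroup M] [Module 𝕜 M]

theorem LinearMap.exists_strongDual_comp_eq_of_norm_le (S : M →ₗ[𝕜] E) (g : M →ₗ[𝕜] 𝕜)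
    {C : ℝ} (hC : 0 ≤ C) (hg : ∀ x, ‖g x‖ ≤ C * ‖S x‖) :
    ∃ φ : StrongDual 𝕜 E, ‖φ‖ ≤ C ∧ ∀ x, φ (S x) = g x := by
  -- Extend `S x ↦ g x` from the range of `S` by Hahn–Banach.
  have hker : LinearMap.ker S ≤ LinearMap.ker g := fun x hx => by
    simpa [LinearMap.mem_ker.mp hx] using hg x
  let f : LinearMap.range S →ₗ[𝕜] 𝕜 :=
    (LinearMap.ker S).liftQ g hker ∘ₗ S.quotKerEquivRange.symm
  have hf : ∀ x, f ⟨S x, LinearMap.mem_range_self S x⟩ = g x := fun x => by simp [f]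
  have hf_le : ∀ y, ‖f y‖ ≤ C * ‖y‖ := by
    rintro ⟨_, x, rfl⟩
    exact (hf x).symm ▸ hg x
  obtain ⟨φ, hφ, hφ_norm⟩ := exists_extension_norm_eq _ (f.mkContinuous C hf_le)
  refine ⟨φ, hφ_norm ▸ f.mkContinuous_norm_le hC hf_le, fun x => ?_⟩
  exact (hφ ⟨S x, LinearMap.mem_range_self S x⟩).trans (hf x)

end Factorization

section Douglas

variable {𝕜 E₁ E₂ H : Type*} [RCLike 𝕜]
  [NormedAddCommGroup E₁] [InnerProductSpace 𝕜 E₁] [CompleteSpace E₁]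
  [NormedAddCommGroup E₂] [InnerProductSpace 𝕜 E₂] [CompleteSpace E₂]
  [NormedAddCommGroup H] [InnerProductSpace 𝕜 H] [CompleteSpace H]

theorem ContinuousLinearMap.reApplyInnerSelf_comp_adjoint (T : E₁ →L[𝕜] H) (x : H) :
    (T ∘L adjoint T).reApplyInnerSelf x = ‖adjoint T x‖ ^ 2 := by
  rw [reApplyInnerSelf_apply, comp_apply, ← adjoint_inner_right, inner_self_eq_norm_sq]

theorem ContinuousLinearMap.isPositive_comp_adjoint_sub_comp_adjoint_iff
    (T₁ : E₁ →L[𝕜] H) (T₂ : E₂ →L[𝕜] H) :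
    (T₂ ∘L adjoint T₂ - T₁ ∘L adjoint T₁).IsPositive ↔
      ∀ x, ‖adjoint T₁ x‖ ≤ ‖adjoint T₂ x‖ := by
  have hsa : IsSelfAdjoint (T₂ ∘L adjoint T₂ - T₁ ∘L adjoint T₁) :=
    (isPositive_self_comp_adjoint T₂).isSelfAdjoint.sub
      (isPositive_self_comp_adjoint T₁).isSelfAdjoint
  refine (isPositive_def'.trans (and_iff_right hsa)).trans (forall_congr' fun x => ?_)
  rw [reApplyInnerSelf_apply, sub_apply, inner_sub_left, map_sub, ← reApplyInnerSelf_apply,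
    ← reApplyInnerSelf_apply, reApplyInnerSelf_comp_adjoint, reApplyInnerSelf_comp_adjoint,
    sub_nonneg]
  exact pow_le_pow_iff_left₀ (norm_nonneg _) (norm_nonneg _) two_ne_zero

theorem ContinuousLinearMap.exists_apply_eq_norm_le_of_norm_adjoint_le
    (T₁ : E₁ →L[𝕜] H) (T₂ : E₂ →L[𝕜] H) (hle : ∀ x, ‖adjoint T₁ x‖ ≤ ‖adjoint T₂ x‖) (ξ : E₁) :
    ∃ η : E₂, T₂ η = T₁ ξ ∧ ‖η‖ ≤ ‖ξ‖ := by
  have hg : ∀ x, ‖innerₛₗ 𝕜 (T₁ ξ) x‖ ≤ ‖ξ‖ * ‖adjoint T₂ x‖ := fun x => by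
    rw [innerₛₗ_apply_apply, ← adjoint_inner_right]
    exact (norm_inner_le_norm _ _).trans (mul_le_mul_of_nonneg_left (hle x) (norm_nonneg ξ))
  obtain ⟨φ, hφ_norm, hφ⟩ := (adjoint T₂ : H →ₗ[𝕜] E₂).exists_strongDual_comp_eq_of_norm_le
    (innerₛₗ 𝕜 (T₁ ξ)) (norm_nonneg ξ) hg
  refine ⟨(InnerProductSpace.toDual 𝕜 E₂).symm φ, ext_inner_right 𝕜 fun x => ?_,
    by simpa using hφ_norm⟩
  rw [← adjoint_inner_right, InnerProductSpace.toDual_symm_apply]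
  exact hφ x

end Douglas

section RangeInclusion

variable {E₁ E₂ H : Type*}
  [NormedAddCommGroup E₁] [InnerProductSpace ℂ E₁] [CompleteSpace E₁]
  [NormedAddCommGroup E₂] [InnerProductSpace ℂ E₂] [CompleteSpace E₂]
  [NormedAddCommGroup H] [InnerProductSpace ℂ H] [CompleteSpace H]

theorem norm_adjoint_le_of_range_subset_of_rangeNorm_le (T₁ : E₁ →L[ℂ] H) (T₂ : E₂ →L[ℂ] H)
    (hsub : Set.range T₁ ⊆ Set.range T₂)
    (hnorm : ∀ h ∈ Set.range T₁, rangeNorm T₂ h ≤ rangeNorm T₁ h) (x : H) :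
    ‖adjoint T₁ x‖ ≤ ‖adjoint T₂ x‖ := by
  set a := adjoint T₁ x
  obtain ⟨η, hη⟩ := hsub ⟨a, rfl⟩
  have key : ‖a‖ ^ 2 ≤ ‖adjoint T₂ x‖ * ‖a‖ := calc
    ‖a‖ ^ 2 = ‖inner ℂ x (T₁ a)‖ := by
        rw [← adjoint_inner_left, inner_self_eq_norm_sq_to_K, norm_pow, RCLike.norm_ofReal,
          abs_norm]
    _ = ‖inner ℂ x (T₂ η)‖ := by rw [hη]
    _ ≤ ‖adjoint T₂ x‖ * rangeNorm T₂ (T₂ η) := norm_inner_le_norm_adjoint_mul_rangeNorm T₂ x η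
    _ ≤ ‖adjoint T₂ x‖ * rangeNorm T₁ (T₁ a) := by
        gcongr
        rw [hη]
        exact hnorm _ ⟨a, rfl⟩
    _ ≤ ‖adjoint T₂ x‖ * ‖a‖ := by gcongr; exact rangeNorm_apply_le T₁ a
  nlinarith [norm_nonneg a, norm_nonneg (adjoint T₂ x)]

theorem range_subset_and_rangeNorm_le_of_norm_adjoint_le (T₁ : E₁ →L[ℂ] H) (T₂ : E₂ →L[ℂ] H)
    (hle : ∀ x, ‖adjoint T₁ x‖ ≤ ‖adjoint T₂ x‖) :
    Set.range T₁ ⊆ Set.range T₂ ∧ ∀ h ∈ Set.range T₁, rangeNorm T₂ h ≤ rangeNorm T₁ h := by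
  refine ⟨?_, ?_⟩
  · rintro _ ⟨ξ, rfl⟩
    obtain ⟨η, hη, -⟩ := exists_apply_eq_norm_le_of_norm_adjoint_le T₁ T₂ hle ξ
    exact ⟨η, hη⟩
  · rintro _ ⟨ξ, rfl⟩
    obtain ⟨ξ₀, hξ₀, hξ₀_norm⟩ := exists_apply_eq_norm_eq_rangeNorm T₁ ξ
    obtain ⟨η, hη, hη_norm⟩ := exists_apply_eq_norm_le_of_norm_adjoint_le T₁ T₂ hle ξ₀
    calc rangeNorm T₂ (T₁ ξ) = rangeNorm T₂ (T₂ η) := by rw [hη, hξ₀]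
      _ ≤ ‖η‖ := rangeNorm_apply_le T₂ η
      _ ≤ ‖ξ₀‖ := hη_norm
      _ = rangeNorm T₁ (T₁ ξ) := hξ₀_norm

end RangeInclusion

theorem stmt7_general {E₁ E₂ H : Type*} [NormedAddCommGroup E₁] [InnerProductSpace ℂ E₁]
    [CompleteSpace E₁] [NormedAddCommGroup E₂] [InnerProductSpace ℂ E₂] [CompleteSpace E₂]
    [NormedAddCommGroup H] [InnerProductSpace ℂ H] [CompleteSpace H]
    (T₁ : E₁ →L[ℂ] H) (T₂ : E₂ →L[ℂ] H) :
    (Set.range T₁ ⊆ Set.range T₂ ∧ ∀ h ∈ Set.range T₁, rangeNorm T₂ h ≤ rangeNorm T₁ h) ↔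
      (T₂ ∘L adjoint T₂ - T₁ ∘L adjoint T₁).IsPositive := by
  rw [isPositive_comp_adjoint_sub_comp_adjoint_iff]
  exact ⟨fun ⟨hsub, hnorm⟩ => norm_adjoint_le_of_range_subset_of_rangeNorm_le T₁ T₂ hsub hnorm,
    range_subset_and_rangeNorm_le_of_norm_adjoint_le T₁ T₂⟩

/-- Let `T₁ : E₁ → H`, `T₂ : E₂ → H` be contractions between Hilbert spaces
and `M(Tᵢ)` the range of `Tᵢ` with the range inner product. Then `M(T₁) ⊆ M(T₂)` with a
contractive inclusion if and only if `T₁T₁^* ≤ T₂T₂^*`. -/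
theorem stmt7 {E₁ E₂ H : Type*} [NormedAddCommGroup E₁] [InnerProductSpace ℂ E₁]
    [CompleteSpace E₁] [NormedAddCommGroup E₂] [InnerProductSpace ℂ E₂] [CompleteSpace E₂]
    [NormedAddCommGroup H] [InnerProductSpace ℂ H] [CompleteSpace H]
    (T₁ : E₁ →L[ℂ] H) (T₂ : E₂ →L[ℂ] H) (hT₁ : ‖T₁‖ ≤ 1) (hT₂ : ‖T₂‖ ≤ 1) :
    (Set.range T₁ ⊆ Set.range T₂ ∧ ∀ h ∈ Set.range T₁, rangeNorm T₂ h ≤ rangeNorm T₁ h) ↔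
      (T₂ ∘L adjoint T₂ - T₁ ∘L adjoint T₁).IsPositive :=
  stmt7_general T₁ T₂
end

section
/- Let T : E → H be an injective bounded operator between Hilbert spaces and let M(T) = T(E) with the inner product ⟨Tξ, Tη⟩_{M(T)} = ⟨ξ, η⟩_E. If H is a reproducing kernel Hilbert space with reproducing vectors 𝔩_λ^H, then M(T) is a reproducing kernel Hilbert space whose reproducing vector at λ is TT^* 𝔩_λ^H. -/
open ContinuousLinearMap

theorem stmt8_general {X : Type*} {E H : Type*} [NormedAddCommGroup E] [InnerProductSpace ℂ E]
    [CompleteSpace E] [NormedAddCommGroup H] [InnerProductSpace ℂ H] [CompleteSpace H]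
    (ev : H → X → ℂ) (k : X → H) (hk : ∀ (lam : X) (f : H), ev f lam = inner ℂ (k lam) f)
    (T : E →L[ℂ] H)
    (ipM : H → H → ℂ) (hipM : ∀ ξ η : E, ipM (T ξ) (T η) = (inner ℂ η ξ : ℂ)) :
    ∀ lam : X, (T ∘L adjoint T) (k lam) ∈ Set.range T ∧
      ∀ ξ : E, ev (T ξ) lam = ipM (T ξ) ((T ∘L adjoint T) (k lam)) := by
  intro lam
  refine ⟨⟨adjoint T (k lam), rfl⟩, fun ξ => ?_⟩
  rw [comp_apply, hipM, adjoint_inner_left, hk]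

/-- Let `T : E → H` be an injective bounded operator between Hilbert spaces
and `M(T) = T(E)` with the inner product `⟨Tξ, Tη⟩_{M(T)} = ⟨ξ, η⟩_E` (encoded by the
function `ipM`, which the hypothesis `hipM` characterizes).  If `H` is a reproducing kernel
Hilbert space of functions on `X` (with realization `ev` and reproducing vectors `k`),
then `M(T)` is a reproducing kernel Hilbert space whose reproducing vector at `λ` is
`T T^* (k λ)`: this vector lies in `M(T)` and reproduces the value at `λ` of every element
of `M(T)` with respect to the `M(T)` inner product. -/
theorem stmt8 {X : Type*} {E H : Type*} [NormedAddCommGroup E] [InnerProductSpace ℂ E]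
    [CompleteSpace E] [NormedAddCommGroup H] [InnerProductSpace ℂ H] [CompleteSpace H]
    (ev : H → X → ℂ) (k : X → H) (hk : ∀ (lam : X) (f : H), ev f lam = inner ℂ (k lam) f)
    (T : E →L[ℂ] H) (hinj : Function.Injective T)
    (ipM : H → H → ℂ) (hipM : ∀ ξ η : E, ipM (T ξ) (T η) = (inner ℂ η ξ : ℂ)) :
    ∀ lam : X, (T ∘L adjoint T) (k lam) ∈ Set.range T ∧
      ∀ ξ : E, ev (T ξ) lam = ipM (T ξ) ((T ∘L adjoint T) (k lam)) :=
  stmt8_general ev k hk T ipM hipM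
end

section
/- Let T : E → H be an injective contraction with H a reproducing kernel Hilbert space with kernel 𝔏^H. Then the kernel (z, λ) ↦ 𝔏^H(z,λ) - 𝔏^{M(T)}(z,λ) is the reproducing kernel of the range space M(D_{T^*}), where D_{T^*} = (I - TT^*)^{1/2} is viewed as an operator from 𝒟_{T^*} = closure(ran D_{T^*}) into H. -/
/-!
`I - TT^*` is the kernel-difference operator: `𝔏^H(z,λ) - 𝔏^{M(T)}(z,λ) = ⟨k_z, (I - TT^*) k_λ⟩`.
For any `D : E → F`, the vector `D D^* v` lies in `M(D)` and `⟨D x, D D^* v⟩_{M(D)} = ⟨v, D x⟩`,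
because `D` only sees the component of `x` in `(ker D)^⊥`. Applied to the self-adjoint
`D = D_{T^*}` with `D^2 = I - TT^*` and `v = k_λ`, this says that `D_{T^*}^2 k_λ` is the
reproducing kernel of `M(D_{T^*})` at `λ`.
-/

open ContinuousLinearMap

namespace ContinuousLinearMap

variable {𝕜 E F : Type*} [RCLike 𝕜] [NormedAddCommGroup E] [InnerProductSpace 𝕜 E]
  [CompleteSpace E] [NormedAddCommGroup F] [InnerProductSpace 𝕜 F]

theorem apply_starProjection_orthogonal_ker (D : E →L[𝕜] F) (x : E) :
    D ((LinearMap.ker (D : E →ₗ[𝕜] F))ᗮ.starProjection x) = D x := by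
  have hker : D ((LinearMap.ker (D : E →ₗ[𝕜] F)).starProjection x) = 0 :=
    LinearMap.mem_ker.mp (Submodule.starProjection_apply_mem _ x)
  rw [Submodule.starProjection_orthogonal', sub_apply, one_apply_eq_self, map_sub, hker, sub_zero]

/-- `ip` is the inner product of the range space `M(D)`, which makes `D` a unitary from
`(ker D)^⊥` onto its range (with `inner` conjugate-linear in the first argument). -/
def IsRangeInner (D : E →L[𝕜] F) (ip : F → F → 𝕜) : Prop :=
  ∀ x y : E, x ∈ (LinearMap.ker (D : E →ₗ[𝕜] F))ᗮ → y ∈ (LinearMap.ker (D : E →ₗ[𝕜] F))ᗮ →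
    ip (D x) (D y) = inner 𝕜 y x

namespace IsRangeInner

variable {D : E →L[𝕜] F} {ip : F → F → 𝕜}

theorem apply_eq_inner_starProjection (hip : IsRangeInner D ip) (x y : E) :
    ip (D x) (D y) = inner 𝕜 y ((LinearMap.ker (D : E →ₗ[𝕜] F))ᗮ.starProjection x) := by
  rw [← D.apply_starProjection_orthogonal_ker x, ← D.apply_starProjection_orthogonal_ker y,
    hip _ _ (Submodule.starProjection_apply_mem _ x) (Submodule.starProjection_apply_mem _ y),
    Submodule.inner_starProjection_left_eq_right,
    Submodule.starProjection_eq_self_iff.mpr (Submodule.starProjection_apply_mem _ x)]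

theorem apply_adjoint [CompleteSpace F] (hip : IsRangeInner D ip) (x : E) (v : F) :
    ip (D x) (D (adjoint D v)) = inner 𝕜 v (D x) := by
  rw [hip.apply_eq_inner_starProjection, adjoint_inner_left, D.apply_starProjection_orthogonal_ker]

end IsRangeInner

end ContinuousLinearMap

theorem stmt9_general {X : Type*} {E H : Type*} [NormedAddCommGroup E] [InnerProductSpace ℂ E]
    [CompleteSpace E] [NormedAddCommGroup H] [InnerProductSpace ℂ H] [CompleteSpace H]
    (ev : H → X → ℂ) (k : X → H) (hk : ∀ (lam : X) (f : H), ev f lam = inner ℂ (k lam) f)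
    (T : E →L[ℂ] H)
    (DTstar : H →L[ℂ] H) (hD_pos : DTstar.IsPositive)
    (hD_sq : DTstar ∘L DTstar = 1 - T ∘L adjoint T)
    (ipD : H → H → ℂ)
    (hipD : ∀ x y : H, x ∈ (LinearMap.ker (DTstar : H →ₗ[ℂ] H))ᗮ → y ∈ (LinearMap.ker (DTstar : H →ₗ[ℂ] H))ᗮ →
      ipD (DTstar x) (DTstar y) = (inner ℂ y x : ℂ)) :
    (∀ z lam : X,
        ev (k lam) z - ev ((T ∘L adjoint T) (k lam)) z = ev ((DTstar ∘L DTstar) (k lam)) z) ∧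
    ∀ lam : X, (DTstar ∘L DTstar) (k lam) ∈ Set.range DTstar ∧
      ∀ x : H, ev (DTstar x) lam = ipD (DTstar x) ((DTstar ∘L DTstar) (k lam)) := by
  have hD_adj : adjoint DTstar = DTstar := hD_pos.isSelfAdjoint
  have hip : IsRangeInner DTstar ipD := hipD
  refine ⟨fun z lam => ?_, fun lam => ⟨⟨DTstar (k lam), rfl⟩, fun x => ?_⟩⟩
  · simp only [hk, hD_sq, sub_apply, one_apply_eq_self, inner_sub_right]
  · rw [hk, comp_apply, ← hip.apply_adjoint, hD_adj]

/-- Let `T : E → H` be an injective contraction, where `H` is a reproducing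
kernel Hilbert space of functions on `X` with kernel `𝔏^H(z,λ) = ev (k λ) z`.  Let
`D_{T^*}` be the positive square root of `I - TT^*`.  Then the kernel
`(z,λ) ↦ 𝔏^H(z,λ) - 𝔏^{M(T)}(z,λ)` is the reproducing kernel of the operator-range space
`M(D_{T^*})`: the reproducing kernel of `M(T)` at `λ` is `TT^*(k λ)`, the difference kernel
at `(z,λ)` equals the value at `z` of `D_{T^*}D_{T^*}(k λ)`, and the latter vector lies in
`M(D_{T^*})` and reproduces the values of elements of `M(D_{T^*})` with respect to its range
inner product `ipD` (characterized on `(ker D_{T^*})^⊥` by `hipD`; Mathlib's `inner` is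
conjugate-linear in the first variable, so the range inner product
`⟨D x, D y⟩_{M(D)} = ⟨x, y⟩` is written `ipD (D x) (D y) = inner y x`). -/
theorem stmt9 {X : Type*} {E H : Type*} [NormedAddCommGroup E] [InnerProductSpace ℂ E]
    [CompleteSpace E] [NormedAddCommGroup H] [InnerProductSpace ℂ H] [CompleteSpace H]
    (ev : H → X → ℂ) (k : X → H) (hk : ∀ (lam : X) (f : H), ev f lam = inner ℂ (k lam) f)
    (T : E →L[ℂ] H) (hinj : Function.Injective T) (hT : ‖T‖ ≤ 1)
    (DTstar : H →L[ℂ] H) (hD_pos : DTstar.IsPositive)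
    (hD_sq : DTstar ∘L DTstar = 1 - T ∘L adjoint T)
    (ipD : H → H → ℂ)
    (hipD : ∀ x y : H, x ∈ (LinearMap.ker (DTstar : H →ₗ[ℂ] H))ᗮ → y ∈ (LinearMap.ker (DTstar : H →ₗ[ℂ] H))ᗮ →
      ipD (DTstar x) (DTstar y) = (inner ℂ y x : ℂ)) :
    (∀ z lam : X,
        ev (k lam) z - ev ((T ∘L adjoint T) (k lam)) z = ev ((DTstar ∘L DTstar) (k lam)) z) ∧
    ∀ lam : X, (DTstar ∘L DTstar) (k lam) ∈ Set.range DTstar ∧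
      ∀ x : H, ev (DTstar x) lam = ipD (DTstar x) ((DTstar ∘L DTstar) (k lam)) :=
  stmt9_general ev k hk T DTstar hD_pos hD_sq ipD hipD
end

section
/- Let T : E → H be a contraction. A vector ξ ∈ H belongs to the range of D_{T^*} if and only if T^*ξ belongs to the range of D_T. Moreover, for ξ₁, ξ₂ in the range of D_{T^*}, the range-space inner products satisfy ⟨ξ₁, ξ₂⟩_{C(T)} = ⟨ξ₁, ξ₂⟩_H + ⟨T^*ξ₁, T^*ξ₂⟩_{C(T^*)}. -/
/-!
`T` intertwines `1 - T†T` and `1 - TT†`, hence also their positive square roots: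
`T D_T = D_{T*} T` and, taking adjoints, `D_T T† = T† D_{T*}`. For the intertwining of square
roots, note that the pairs `(x, y)` with `T x = y T` and `x T† = T† y` form a closed star
subalgebra of `L(E) × L(H)`, so it contains `√(c, c')` whenever it contains `(c, c')`.

Then `T† (D_{T*} η) = D_T (T† η)` gives one inclusion of ranges, and `T† ξ = D_T e` gives
`ξ = D_{T*} (D_{T*} ξ + T e)`. For the inner products, write `ξᵢ = D_{T*} ηᵢ` with
`ηᵢ ⊥ ker D_{T*}`; then `T† ηᵢ ⊥ ker D_T` because `T` maps `ker D_T` into `ker D_{T*}`, and the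
claim becomes `⟨η₁, η₂⟩ = ⟨D_{T*} η₁, D_{T*} η₂⟩ + ⟨T† η₁, T† η₂⟩`, i.e. `D_{T*}² + T T† = 1`.
-/

open ContinuousLinearMap

lemma cfc_sqrt_mul_self {A : Type*} [CStarAlgebra A] [PartialOrder A] [StarOrderedRing A]
    {a : A} (ha : 0 ≤ a) : cfc Real.sqrt (a * a) = a := by
  rw [← cfcₙ_eq_cfc, ← CFC.sqrt_eq_real_sqrt _ ha.isSelfAdjoint.mul_self_nonneg,
    CFC.sqrt_mul_self a ha]

namespace ContinuousLinearMap

variable {E H : Type*} [NormedAddCommGroup E] [InnerProductSpace ℂ E] [CompleteSpace E]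
  [NormedAddCommGroup H] [InnerProductSpace ℂ H] [CompleteSpace H]

/-- The second condition makes this set closed under `star`. -/
def intertwiners (b : E →L[ℂ] H) : StarSubalgebra ℂ ((E →L[ℂ] E) × (H →L[ℂ] H)) where
  carrier := {p | b ∘L p.1 = p.2 ∘L b ∧ p.1 ∘L adjoint b = adjoint b ∘L p.2}
  mul_mem' := by
    rintro ⟨x, y⟩ ⟨x', y'⟩ ⟨h₁, h₂⟩ ⟨h₁', h₂'⟩
    refine ⟨?_, ?_⟩
    · change b ∘L (x ∘L x') = (y ∘L y') ∘L b
      rw [← comp_assoc, h₁, comp_assoc, h₁', comp_assoc]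
    · change (x ∘L x') ∘L adjoint b = adjoint b ∘L (y ∘L y')
      rw [comp_assoc, h₂', ← comp_assoc, h₂, comp_assoc]
  add_mem' := by
    rintro ⟨x, y⟩ ⟨x', y'⟩ ⟨h₁, h₂⟩ ⟨h₁', h₂'⟩
    exact ⟨by simp_all [comp_add, add_comp], by simp_all [comp_add, add_comp]⟩
  algebraMap_mem' c :=
    ⟨by ext; simp [Algebra.algebraMap_eq_smul_one],
      by ext; simp [Algebra.algebraMap_eq_smul_one]⟩
  star_mem' := by
    rintro ⟨x, y⟩ ⟨h₁, h₂⟩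
    refine ⟨?_, ?_⟩
    · simpa [star_eq_adjoint, adjoint_comp] using congrArg adjoint h₂
    · simpa [star_eq_adjoint, adjoint_comp] using congrArg adjoint h₁

lemma isClosed_intertwiners (b : E →L[ℂ] H) :
    IsClosed (intertwiners b : Set ((E →L[ℂ] E) × (H →L[ℂ] H))) := by
  refine (isClosed_eq ?_ ?_).inter (isClosed_eq ?_ ?_) <;> fun_prop

lemma comp_adjoint_eq_adjoint_comp (b : E →L[ℂ] H) {x : E →L[ℂ] E} {y : H →L[ℂ] H}
    (hx : IsSelfAdjoint x) (hy : IsSelfAdjoint y) (h : b ∘L x = y ∘L b) :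
    x ∘L adjoint b = adjoint b ∘L y := by
  simpa [adjoint_comp, hx.adjoint_eq, hy.adjoint_eq] using congrArg adjoint h

lemma comp_cfc_eq_cfc_comp (b : E →L[ℂ] H) {x : E →L[ℂ] E} {y : H →L[ℂ] H}
    (hx : IsSelfAdjoint x) (hy : IsSelfAdjoint y) (h : b ∘L x = y ∘L b)
    (f : ℝ → ℝ) (hf : Continuous f) :
    b ∘L cfc f x = cfc f y ∘L b := by
  have hxy : (x, y) ∈ intertwiners b :=
    ⟨h, comp_adjoint_eq_adjoint_comp b hx hy h⟩
  have := isClosed_intertwiners b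
  -- instance search does not find the real functional calculus on the product algebra
  let _ : ContinuousFunctionalCalculus ℝ ((E →L[ℂ] E) × (H →L[ℂ] H)) IsSelfAdjoint :=
    IsSelfAdjoint.instContinuousFunctionalCalculus
  have hmem := cfc_mem (𝕜 := ℝ) (𝕜' := ℂ) (s := intertwiners b) f hxy
  have hxy_sa : IsSelfAdjoint (x, y) := Prod.ext hx.star_eq hy.star_eq
  rw [cfc_map_prod (S := ℂ) f x y (hab := hxy_sa)] at hmem
  exact hmem.1

lemma comp_eq_comp_of_comp_mul_self (b : E →L[ℂ] H) {a : E →L[ℂ] E} {a' : H →L[ℂ] H}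
    (ha : a.IsPositive) (ha' : a'.IsPositive) (h : b ∘L (a ∘L a) = (a' ∘L a') ∘L b) :
    b ∘L a = a' ∘L b := by
  rw [← nonneg_iff_isPositive] at ha ha'
  simpa only [cfc_sqrt_mul_self ha, cfc_sqrt_mul_self ha'] using
    comp_cfc_eq_cfc_comp b ha.isSelfAdjoint.mul_self_nonneg.isSelfAdjoint
      ha'.isSelfAdjoint.mul_self_nonneg.isSelfAdjoint h
      Real.sqrt Real.continuous_sqrt

lemma exists_mem_orthogonal_ker_apply_eq {𝕜 F G : Type*} [RCLike 𝕜] [NormedAddCommGroup F]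
    [InnerProductSpace 𝕜 F] [CompleteSpace F] [NormedAddCommGroup G] [NormedSpace 𝕜 G]
    (D : F →L[𝕜] G) {ξ : G} (hξ : ξ ∈ Set.range D) :
    ∃ η ∈ (LinearMap.ker (D : F →ₗ[𝕜] G))ᗮ, D η = ξ := by
  obtain ⟨η, rfl⟩ := hξ
  have : CompleteSpace (LinearMap.ker (D : F →ₗ[𝕜] G)) := D.isClosed_ker.completeSpace_coe
  obtain ⟨y, hy, z, hz, rfl⟩ :=
    (LinearMap.ker (D : F →ₗ[𝕜] G)).exists_add_mem_mem_orthogonal η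
  exact ⟨z, hz, by rw [map_add, show D y = 0 from hy, zero_add]⟩

section Defect

variable {T : E →L[ℂ] H} {DT : E →L[ℂ] E} {DTstar : H →L[ℂ] H}

lemma comp_defect_eq_defect_comp (hDT_pos : DT.IsPositive)
    (hDT_sq : DT ∘L DT = 1 - adjoint T ∘L T)
    (hDTstar_pos : DTstar.IsPositive) (hDTstar_sq : DTstar ∘L DTstar = 1 - T ∘L adjoint T) :
    T ∘L DT = DTstar ∘L T :=
  comp_eq_comp_of_comp_mul_self T hDT_pos hDTstar_pos <| by
    rw [hDT_sq, hDTstar_sq, comp_sub, sub_comp, comp_assoc]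
    rfl

variable (hTD : T ∘L DT = DTstar ∘L T)
include hTD

lemma mem_range_defect_iff_adjoint_mem_range (hDT : IsSelfAdjoint DT)
    (hDTstar : IsSelfAdjoint DTstar) (hDTstar_sq : DTstar ∘L DTstar = 1 - T ∘L adjoint T)
    (ξ : H) : ξ ∈ Set.range DTstar ↔ adjoint T ξ ∈ Set.range DT := by
  constructor
  · rintro ⟨η, rfl⟩
    exact ⟨adjoint T η, congr($(comp_adjoint_eq_adjoint_comp T hDT hDTstar hTD) η)⟩
  · rintro ⟨e, he⟩
    refine ⟨DTstar ξ + T e, ?_⟩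
    have hξ : DTstar (DTstar ξ) = ξ - T (adjoint T ξ) := congr($hDTstar_sq ξ)
    rw [map_add, hξ, ← comp_apply DTstar T, ← hTD, comp_apply, he, sub_add_cancel]

lemma adjoint_mem_orthogonal_ker {η : H}
    (hη : η ∈ (LinearMap.ker (DTstar : H →ₗ[ℂ] H))ᗮ) :
    adjoint T η ∈ (LinearMap.ker (DT : E →ₗ[ℂ] E))ᗮ := by
  refine (Submodule.mem_orthogonal _ _).2 fun e he => ?_
  have hTe : DTstar (T e) = 0 := by
    rw [← comp_apply DTstar T, ← hTD, comp_apply, show DT e = 0 from he, map_zero]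
  rw [adjoint_inner_right]
  exact (Submodule.mem_orthogonal _ η).1 hη (T e) hTe

omit hTD in
lemma inner_defect_add_inner_adjoint (hDTstar : IsSelfAdjoint DTstar)
    (hDTstar_sq : DTstar ∘L DTstar = 1 - T ∘L adjoint T) (η₁ η₂ : H) :
    inner ℂ (DTstar η₁) (DTstar η₂) + inner ℂ (adjoint T η₁) (adjoint T η₂) =
      inner ℂ η₁ η₂ := by
  have hsymm : inner ℂ (DTstar η₁) (DTstar η₂) = inner ℂ η₁ (DTstar (DTstar η₂)) :=
    hDTstar.isSymmetric η₁ (DTstar η₂)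
  rw [hsymm, adjoint_inner_left, ← inner_add_right, ← comp_apply DTstar DTstar, hDTstar_sq]
  simp

end Defect

end ContinuousLinearMap

theorem stmt10_general {E H : Type*} [NormedAddCommGroup E] [InnerProductSpace ℂ E] [CompleteSpace E]
    [NormedAddCommGroup H] [InnerProductSpace ℂ H] [CompleteSpace H]
    (T : E →L[ℂ] H)
    (DT : E →L[ℂ] E) (hDT_pos : DT.IsPositive) (hDT_sq : DT ∘L DT = 1 - adjoint T ∘L T)
    (DTstar : H →L[ℂ] H) (hDTstar_pos : DTstar.IsPositive)
    (hDTstar_sq : DTstar ∘L DTstar = 1 - T ∘L adjoint T)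
    (ipCT : H → H → ℂ)
    (hipCT : ∀ x y : H, x ∈ (LinearMap.ker (DTstar : H →ₗ[ℂ] H))ᗮ → y ∈ (LinearMap.ker (DTstar : H →ₗ[ℂ] H))ᗮ →
      ipCT (DTstar x) (DTstar y) = (inner ℂ y x : ℂ))
    (ipCTstar : E → E → ℂ)
    (hipCTstar : ∀ x y : E, x ∈ (LinearMap.ker (DT : E →ₗ[ℂ] E))ᗮ → y ∈ (LinearMap.ker (DT : E →ₗ[ℂ] E))ᗮ →
      ipCTstar (DT x) (DT y) = (inner ℂ y x : ℂ)) :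
    (∀ ξ : H, ξ ∈ Set.range DTstar ↔ adjoint T ξ ∈ Set.range DT) ∧
    ∀ ξ₁ ∈ Set.range DTstar, ∀ ξ₂ ∈ Set.range DTstar,
      ipCT ξ₁ ξ₂ = (inner ℂ ξ₂ ξ₁ : ℂ) + ipCTstar (adjoint T ξ₁) (adjoint T ξ₂) := by
  have hTD := comp_defect_eq_defect_comp hDT_pos hDT_sq hDTstar_pos hDTstar_sq
  have hTD_adjoint : ∀ η, adjoint T (DTstar η) = DT (adjoint T η) := fun η =>
    congr($(comp_adjoint_eq_adjoint_comp T hDT_pos.isSelfAdjoint hDTstar_pos.isSelfAdjoint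
      hTD) η).symm
  refine ⟨mem_range_defect_iff_adjoint_mem_range hTD hDT_pos.isSelfAdjoint
    hDTstar_pos.isSelfAdjoint hDTstar_sq, ?_⟩
  rintro _ h₁ _ h₂
  obtain ⟨η₁, hη₁, rfl⟩ := exists_mem_orthogonal_ker_apply_eq DTstar h₁
  obtain ⟨η₂, hη₂, rfl⟩ := exists_mem_orthogonal_ker_apply_eq DTstar h₂
  rw [hipCT η₁ η₂ hη₁ hη₂, hTD_adjoint, hTD_adjoint,
    hipCTstar _ _ (adjoint_mem_orthogonal_ker hTD hη₁) (adjoint_mem_orthogonal_ker hTD hη₂),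
    inner_defect_add_inner_adjoint hDTstar_pos.isSelfAdjoint hDTstar_sq]

/-- Let `T : E → H` be a contraction, `D_T = (I - T^*T)^{1/2}`,
`D_{T^*} = (I - TT^*)^{1/2}`.  A vector `ξ ∈ H` belongs to the range of `D_{T^*}` if and only
if `T^*ξ` belongs to the range of `D_T`.  Moreover, for `ξ₁, ξ₂` in the range of `D_{T^*}`,
the range-space inner products satisfy
`⟨ξ₁, ξ₂⟩_{C(T)} = ⟨ξ₁, ξ₂⟩_H + ⟨T^*ξ₁, T^*ξ₂⟩_{C(T^*)}`.
Here `C(T)` is the range of `D_{T^*}` with the inner product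
`⟨D_{T^*}η₁, D_{T^*}η₂⟩_{C(T)} = ⟨η₁, η₂⟩` for `η₁, η₂ ∈ (ker D_{T^*})^⊥` (encoded by `ipCT`),
and similarly `C(T^*)` is the range of `D_T` (inner product `ipCTstar`).  Mathlib's `inner` is
conjugate-linear in the first variable, so the paper's `⟨x, y⟩` is written `inner y x`. -/
theorem stmt10 {E H : Type*} [NormedAddCommGroup E] [InnerProductSpace ℂ E] [CompleteSpace E]
    [NormedAddCommGroup H] [InnerProductSpace ℂ H] [CompleteSpace H]
    (T : E →L[ℂ] H) (hT : ‖T‖ ≤ 1)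
    (DT : E →L[ℂ] E) (hDT_pos : DT.IsPositive) (hDT_sq : DT ∘L DT = 1 - adjoint T ∘L T)
    (DTstar : H →L[ℂ] H) (hDTstar_pos : DTstar.IsPositive)
    (hDTstar_sq : DTstar ∘L DTstar = 1 - T ∘L adjoint T)
    (ipCT : H → H → ℂ)
    (hipCT : ∀ x y : H, x ∈ (LinearMap.ker (DTstar : H →ₗ[ℂ] H))ᗮ → y ∈ (LinearMap.ker (DTstar : H →ₗ[ℂ] H))ᗮ →
      ipCT (DTstar x) (DTstar y) = (inner ℂ y x : ℂ))
    (ipCTstar : E → E → ℂ)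
    (hipCTstar : ∀ x y : E, x ∈ (LinearMap.ker (DT : E →ₗ[ℂ] E))ᗮ → y ∈ (LinearMap.ker (DT : E →ₗ[ℂ] E))ᗮ →
      ipCTstar (DT x) (DT y) = (inner ℂ y x : ℂ)) :
    (∀ ξ : H, ξ ∈ Set.range DTstar ↔ adjoint T ξ ∈ Set.range DT) ∧
    ∀ ξ₁ ∈ Set.range DTstar, ∀ ξ₂ ∈ Set.range DTstar,
      ipCT ξ₁ ξ₂ = (inner ℂ ξ₂ ξ₁ : ℂ) + ipCTstar (adjoint T ξ₁) (adjoint T ξ₂) :=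
  stmt10_general T DT hDT_pos hDT_sq DTstar hDTstar_pos hDTstar_sq ipCT hipCT ipCTstar hipCTstar
end

section
/- For a contraction T : E → H between Hilbert spaces, the Julia operator J(T) : E ⊕ 𝒟_{T^*} → H ⊕ 𝒟_T given by the block matrix [[T, D_{T^*}], [D_T, -T^*]] is unitary. -/
/-! The Julia operator `J = [[T, D_{T*}], [D_T, -T*]]` is unitary because of the intertwining
relation `T D_T = D_{T*} T` (and its adjoint `D_T T* = T* D_{T*}`): with it, `J` maps
`E ⊕ 𝒟_{T*}` isometrically into `H ⊕ 𝒟_T`, and `J* = [[T*, D_T], [D_{T*}, -T]]` is a right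
inverse of `J` there. The relation holds for the squares since `T (I - T*T) = (I - TT*) T`. To pass
to square roots, note that `[[0, 0], [T, 0]]` then commutes with `diag(D_T, D_{T*})²`, hence with
its positive square root `diag(D_T, D_{T*})` by the continuous functional calculus. -/

namespace ContinuousLinearMap

section BlockOperators

variable {E H : Type*} [NormedAddCommGroup E] [InnerProductSpace ℂ E]
  [NormedAddCommGroup H] [InnerProductSpace ℂ H]

def blockDiag (A : E →L[ℂ] E) (B : H →L[ℂ] H) :
    WithLp 2 (E × H) →L[ℂ] WithLp 2 (E × H) :=
  (WithLp.prodContinuousLinearEquiv 2 ℂ E H).symm.toContinuousLinearMap ∘L A.prodMap B ∘L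
    (WithLp.prodContinuousLinearEquiv 2 ℂ E H).toContinuousLinearMap

def blockLowerLeft (X : E →L[ℂ] H) : WithLp 2 (E × H) →L[ℂ] WithLp 2 (E × H) :=
  (WithLp.prodContinuousLinearEquiv 2 ℂ E H).symm.toContinuousLinearMap ∘L
    inr ℂ E H ∘L X ∘L fst ℂ E H ∘L
    (WithLp.prodContinuousLinearEquiv 2 ℂ E H).toContinuousLinearMap

@[simp]
lemma blockDiag_apply (A : E →L[ℂ] E) (B : H →L[ℂ] H) (z : WithLp 2 (E × H)) :
    blockDiag A B z = WithLp.toLp 2 (A z.fst, B z.snd) := rfl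

@[simp]
lemma blockLowerLeft_apply (X : E →L[ℂ] H) (z : WithLp 2 (E × H)) :
    blockLowerLeft X z = WithLp.toLp 2 (0, X z.fst) := rfl

lemma blockDiag_mul (A A' : E →L[ℂ] E) (B B' : H →L[ℂ] H) :
    blockDiag A B * blockDiag A' B' = blockDiag (A * A') (B * B') := rfl

lemma IsPositive.blockDiag {A : E →L[ℂ] E} {B : H →L[ℂ] H} (hA : A.IsPositive)
    (hB : B.IsPositive) : (blockDiag A B).IsPositive := by
  refine ⟨fun z w => ?_, fun z => ?_⟩
  · simp [hA.isSymmetric.apply_clm, hB.isSymmetric.apply_clm]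
  · simpa [reApplyInnerSelf] using add_nonneg (hA.re_inner_nonneg_left z.fst)
      (hB.re_inner_nonneg_left z.snd)

lemma commute_blockLowerLeft_blockDiag_iff (X : E →L[ℂ] H) (A : E →L[ℂ] E)
    (B : H →L[ℂ] H) :
    Commute (blockLowerLeft X) (blockDiag A B) ↔ X ∘L A = B ∘L X := by
  refine ⟨fun h => ext fun x => ?_, fun h => ?_⟩
  · simpa using congr_arg WithLp.snd (DFunLike.congr_fun h.eq (WithLp.toLp 2 (x, 0)))
  · have hX : ∀ x, X (A x) = B (X x) := DFunLike.congr_fun h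
    ext z
    simp [hX]

end BlockOperators

section Closure

variable {𝕜 E F : Type*} [NontriviallyNormedField 𝕜]
  [NormedAddCommGroup E] [NormedSpace 𝕜 E] [NormedAddCommGroup F] [NormedSpace 𝕜 F]

theorem mapsTo_closure_range_of_comp_eq {X : E →L[𝕜] F} {A : E →L[𝕜] E}
    {B : F →L[𝕜] F} (h : X ∘L A = B ∘L X) :
    Set.MapsTo X (closure (Set.range A)) (closure (Set.range B)) := by
  refine Set.MapsTo.closure ?_ X.continuous
  rintro _ ⟨x, rfl⟩
  exact ⟨X x, (DFunLike.congr_fun h x).symm⟩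

theorem sub_mem_closure_range {A : E →L[𝕜] F} {a b : F} (ha : a ∈ closure (Set.range A))
    (hb : b ∈ closure (Set.range A)) : a - b ∈ closure (Set.range A) := by
  have hcl :
      closure (Set.range A) = (LinearMap.range (A : E →ₗ[𝕜] F)).topologicalClosure := by
    rw [Submodule.topologicalClosure_coe, LinearMap.coe_range, coe_coe]
  rw [hcl] at ha hb ⊢
  exact sub_mem ha hb

end Closure

theorem norm_sq_add_norm_sq_of_comp_self_eq {𝕜 E H : Type*} [RCLike 𝕜]
    [NormedAddCommGroup E] [InnerProductSpace 𝕜 E] [CompleteSpace E]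
    [NormedAddCommGroup H] [InnerProductSpace 𝕜 H] [CompleteSpace H]
    {T : E →L[𝕜] H} {D : E →L[𝕜] E}
    (hD : IsSelfAdjoint D) (hDsq : D ∘L D = 1 - adjoint T ∘L T) (x : E) :
    ‖T x‖ ^ 2 + ‖D x‖ ^ 2 = ‖x‖ ^ 2 := by
  rw [apply_norm_sq_eq_inner_adjoint_left T, apply_norm_sq_eq_inner_adjoint_left D,
    isSelfAdjoint_iff'.mp hD, hDsq, ← map_add, ← inner_add_left,
    ← inner_self_eq_norm_sq (𝕜 := 𝕜)]
  simp

variable {E H : Type*} [NormedAddCommGroup E] [InnerProductSpace ℂ E] [CompleteSpace E]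
  [NormedAddCommGroup H] [InnerProductSpace ℂ H] [CompleteSpace H]

theorem comp_eq_comp_of_comp_mul_self_eq {X : E →L[ℂ] H} {A : E →L[ℂ] E} {B : H →L[ℂ] H}
    (hA : A.IsPositive) (hB : B.IsPositive) (h : X ∘L (A * A) = (B * B) ∘L X) :
    X ∘L A = B ∘L X := by
  rw [← commute_blockLowerLeft_blockDiag_iff, ← blockDiag_mul] at h
  rw [← commute_blockLowerLeft_blockDiag_iff]
  have hM : 0 ≤ blockDiag A B := (nonneg_iff_isPositive _).mpr (hA.blockDiag hB)
  have := (h.symm.cfcₙ_nnreal NNReal.sqrt).symm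
  exact CFC.sqrt_mul_self _ hM ▸ this

theorem comp_defect_eq_defect_comp_s11 (T : E →L[ℂ] H) {D : E →L[ℂ] E} {D' : H →L[ℂ] H}
    (hD : D.IsPositive) (hDsq : D ∘L D = 1 - adjoint T ∘L T)
    (hD' : D'.IsPositive) (hD'sq : D' ∘L D' = 1 - T ∘L adjoint T) :
    T ∘L D = D' ∘L T := by
  refine comp_eq_comp_of_comp_mul_self_eq hD hD' ?_
  rw [mul_def, mul_def, hDsq, hD'sq]
  ext x
  simp

theorem adjoint_comp_defect_eq_defect_comp (T : E →L[ℂ] H) {D : E →L[ℂ] E}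
    {D' : H →L[ℂ] H}
    (hD : D.IsPositive) (hDsq : D ∘L D = 1 - adjoint T ∘L T)
    (hD' : D'.IsPositive) (hD'sq : D' ∘L D' = 1 - T ∘L adjoint T) :
    adjoint T ∘L D' = D ∘L adjoint T :=
  comp_defect_eq_defect_comp_s11 (adjoint T) hD' (by rwa [adjoint_adjoint]) hD
    (by rwa [adjoint_adjoint])

theorem julia_norm_sq_add_norm_sq (T : E →L[ℂ] H) {D : E →L[ℂ] E} {D' : H →L[ℂ] H}
    (hD : D.IsPositive) (hDsq : D ∘L D = 1 - adjoint T ∘L T)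
    (hD' : D'.IsPositive) (hD'sq : D' ∘L D' = 1 - T ∘L adjoint T) (x : E) (y : H) :
    ‖T x + D' y‖ ^ 2 + ‖D x - adjoint T y‖ ^ 2 = ‖x‖ ^ 2 + ‖y‖ ^ 2 := by
  have hcross : inner ℂ (T x) (D' y) = inner ℂ (D x) (adjoint T y) := by
    rw [← hD'.isSymmetric.apply_clm, adjoint_inner_right, ← comp_apply,
      ← comp_defect_eq_defect_comp_s11 T hD hDsq hD' hD'sq, comp_apply]
  have hx := norm_sq_add_norm_sq_of_comp_self_eq hD.isSelfAdjoint hDsq x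
  have hy := norm_sq_add_norm_sq_of_comp_self_eq (T := adjoint T) hD'.isSelfAdjoint
    (by rwa [adjoint_adjoint]) y
  rw [norm_add_sq (𝕜 := ℂ), norm_sub_sq (𝕜 := ℂ), hcross]
  linarith

theorem julia_juliaAdjoint_apply (T : E →L[ℂ] H) {D : E →L[ℂ] E} {D' : H →L[ℂ] H}
    (hD : D.IsPositive) (hDsq : D ∘L D = 1 - adjoint T ∘L T)
    (hD' : D'.IsPositive) (hD'sq : D' ∘L D' = 1 - T ∘L adjoint T) (u : H) (v : E) :
    T (adjoint T u + D v) + D' (D' u - T v) = u ∧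
      D (adjoint T u + D v) - adjoint T (D' u - T v) = v := by
  have hDv : D (D v) = v - adjoint T (T v) := by simpa using DFunLike.congr_fun hDsq v
  have hD'u : D' (D' u) = u - T (adjoint T u) := by simpa using DFunLike.congr_fun hD'sq u
  have hTD : T (D v) = D' (T v) :=
    DFunLike.congr_fun (comp_defect_eq_defect_comp_s11 T hD hDsq hD' hD'sq) v
  have hTD' : adjoint T (D' u) = D (adjoint T u) :=
    DFunLike.congr_fun (adjoint_comp_defect_eq_defect_comp T hD hDsq hD' hD'sq) u
  simp only [map_add, map_sub, hDv, hD'u, hTD, hTD']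
  constructor <;> abel

end ContinuousLinearMap

open ContinuousLinearMap

theorem stmt11_general {E H : Type*} [NormedAddCommGroup E] [InnerProductSpace ℂ E] [CompleteSpace E]
    [NormedAddCommGroup H] [InnerProductSpace ℂ H] [CompleteSpace H]
    (T : E →L[ℂ] H)
    (DT : E →L[ℂ] E) (hDT_pos : DT.IsPositive) (hDT_sq : DT ∘L DT = 1 - adjoint T ∘L T)
    (DTstar : H →L[ℂ] H) (hDTstar_pos : DTstar.IsPositive)
    (hDTstar_sq : DTstar ∘L DTstar = 1 - T ∘L adjoint T) :
    (∀ (x : E), ∀ y ∈ closure (Set.range DTstar),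
        DT x - adjoint T y ∈ closure (Set.range DT)) ∧
    (∀ (x : E), ∀ y ∈ closure (Set.range DTstar),
        ‖T x + DTstar y‖ ^ 2 + ‖DT x - adjoint T y‖ ^ 2 = ‖x‖ ^ 2 + ‖y‖ ^ 2) ∧
    (∀ (u : H), ∀ v ∈ closure (Set.range DT), ∃ (x : E) (y : H),
        y ∈ closure (Set.range DTstar) ∧ T x + DTstar y = u ∧ DT x - adjoint T y = v) := by
  have hTD := comp_defect_eq_defect_comp_s11 T hDT_pos hDT_sq hDTstar_pos hDTstar_sq
  have hTD' := adjoint_comp_defect_eq_defect_comp T hDT_pos hDT_sq hDTstar_pos hDTstar_sq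
  refine ⟨fun x y hy => ?_, fun x y _ => ?_, fun u v hv => ?_⟩
  · exact sub_mem_closure_range (subset_closure ⟨x, rfl⟩)
      (mapsTo_closure_range_of_comp_eq hTD' hy)
  · exact julia_norm_sq_add_norm_sq T hDT_pos hDT_sq hDTstar_pos hDTstar_sq x y
  · refine ⟨adjoint T u + DT v, DTstar u - T v, ?_,
      julia_juliaAdjoint_apply T hDT_pos hDT_sq hDTstar_pos hDTstar_sq u v⟩
    exact sub_mem_closure_range (subset_closure ⟨u, rfl⟩)
      (mapsTo_closure_range_of_comp_eq hTD hv)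

/-- For a contraction `T : E → H` between Hilbert spaces, the Julia operator
`J(T) : E ⊕ 𝒟_{T^*} → H ⊕ 𝒟_T`, given by the block matrix `[[T, D_{T^*}], [D_T, -T^*]]`
(i.e. `x ⊕ y ↦ (Tx + D_{T^*}y) ⊕ (D_T x - T^* y)`), is unitary.  Here `D_T, D_{T^*}` are the
positive square roots of `I - T^*T` and `I - TT^*`, and `𝒟_T ⊆ E`, `𝒟_{T^*} ⊆ H` are the
closures of their ranges.  Unitarity is expressed by: `J(T)` maps `E ⊕ 𝒟_{T^*}` into
`H ⊕ 𝒟_T`, it is isometric there, and it is onto `H ⊕ 𝒟_T`. -/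
theorem stmt11 {E H : Type*} [NormedAddCommGroup E] [InnerProductSpace ℂ E] [CompleteSpace E]
    [NormedAddCommGroup H] [InnerProductSpace ℂ H] [CompleteSpace H]
    (T : E →L[ℂ] H) (hT : ‖T‖ ≤ 1)
    (DT : E →L[ℂ] E) (hDT_pos : DT.IsPositive) (hDT_sq : DT ∘L DT = 1 - adjoint T ∘L T)
    (DTstar : H →L[ℂ] H) (hDTstar_pos : DTstar.IsPositive)
    (hDTstar_sq : DTstar ∘L DTstar = 1 - T ∘L adjoint T) :
    (∀ (x : E), ∀ y ∈ closure (Set.range DTstar),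
        DT x - adjoint T y ∈ closure (Set.range DT)) ∧
    (∀ (x : E), ∀ y ∈ closure (Set.range DTstar),
        ‖T x + DTstar y‖ ^ 2 + ‖DT x - adjoint T y‖ ^ 2 = ‖x‖ ^ 2 + ‖y‖ ^ 2) ∧
    (∀ (u : H), ∀ v ∈ closure (Set.range DT), ∃ (x : E) (y : H),
        y ∈ closure (Set.range DTstar) ∧ T x + DTstar y = u ∧ DT x - adjoint T y = v) :=
  stmt11_general T DT hDT_pos hDT_sq DTstar hDTstar_pos hDTstar_sq
end
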